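/- Let H = (u²(Pu² + Py²) + ξ)/(2(1+ρu²)) on T*((0,∞)×ℝ) and S₁ = u·Pu·Py + y·(Py² − 2ρH). Then {H, S₁} = 0 for the canonical Poisson bracket. -/

import Mathlib

/-- The canonical Poisson bracket on phase space with coordinates `(u, y, Pu, Py)`. -/
noncomputable def poissonBracket (f g : ℝ → ℝ → ℝ → ℝ → ℝ) (u y pu py : ℝ) : ℝ :=
    deriv (fun u' => f u' y pu py) u * deriv (fun pu' => g u y pu' py) pu
  + deriv (fun y' => f u y' pu py) y * deriv (fun py' => g u y pu py') py
  - deriv (fun pu' => f u y pu' py) pu * deriv (fun u' => g u' y pu py) u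
  - deriv (fun py' => f u y pu py') py * deriv (fun y' => g u y' pu py) y

/-- Affine-case Koenigs Hamiltonian `H = (u²(Pu²+Py²) + ξ)/(2(1+ρu²))`. -/
noncomputable def Haff (ρ ξ u y pu py : ℝ) : ℝ :=
  (u ^ 2 * (pu ^ 2 + py ^ 2) + ξ) / (2 * (1 + ρ * u ^ 2))

/-- The quadratic integral `S₁ = u·Pu·Py + y·(Py² - 2ρH)`. -/
noncomputable def S1aff (ρ ξ u y pu py : ℝ) : ℝ :=
  u * pu * py + y * (py ^ 2 - 2 * ρ * Haff ρ ξ u y pu py)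

/-- For the affine Koenigs system on `T*((0,∞)×ℝ)`, `{H, S₁} = 0`. -/
theorem stmt19 (ρ ξ : ℝ) (hρ : 0 < ρ) :
    ∀ u ∈ Set.Ioi (0 : ℝ), ∀ y pu py : ℝ,
      poissonBracket (Haff ρ ξ) (S1aff ρ ξ) u y pu py = 0 := by
  intro u hu y pu py
  have hQ0 : (0:ℝ) < 1 + ρ * u ^ 2 := by nlinarith [mul_nonneg hρ.le (sq_nonneg u)]
  have hQ1 : (1 + ρ * u ^ 2 : ℝ) ≠ 0 := ne_of_gt hQ0
  have hQ : (2:ℝ) * (1 + ρ * u ^ 2) ≠ 0 := by positivity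
  -- H derivatives
  have hHu : HasDerivAt (fun u' => (u' ^ 2 * (pu ^ 2 + py ^ 2) + ξ) / (2 * (1 + ρ * u' ^ 2)))
      ((2 * u * (pu ^ 2 + py ^ 2) * (2 * (1 + ρ * u ^ 2)) -
        (u ^ 2 * (pu ^ 2 + py ^ 2) + ξ) * (2 * (ρ * (2 * u)))) / (2 * (1 + ρ * u ^ 2)) ^ 2) u := by
    have hnum : HasDerivAt (fun u' => u' ^ 2 * (pu ^ 2 + py ^ 2) + ξ)
        (2 * u * (pu ^ 2 + py ^ 2)) u := by
      have := ((hasDerivAt_pow 2 u).mul_const (pu ^ 2 + py ^ 2)).add_const ξ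
      convert this using 1
      · rfl
      · rfl
      · push_cast; ring
    have hden : HasDerivAt (fun u' => 2 * (1 + ρ * u' ^ 2)) (2 * (ρ * (2 * u))) u := by
      have := (((hasDerivAt_pow 2 u).const_mul ρ).const_add 1).const_mul 2
      convert this using 1
      · rfl
      · rfl
      · push_cast; ring
    exact hnum.div hden hQ
  have hHpu : HasDerivAt (fun pu' => (u ^ 2 * (pu' ^ 2 + py ^ 2) + ξ) / (2 * (1 + ρ * u ^ 2)))
      (u ^ 2 * (2 * pu) / (2 * (1 + ρ * u ^ 2))) pu := by
    have := ((((hasDerivAt_pow 2 pu).add_const (py ^ 2)).const_mul (u ^ 2)).add_const ξ).div_const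
      (2 * (1 + ρ * u ^ 2))
    convert this using 1
    · rfl
    · rfl
    · push_cast; ring
  have hHpy : HasDerivAt (fun py' => (u ^ 2 * (pu ^ 2 + py' ^ 2) + ξ) / (2 * (1 + ρ * u ^ 2)))
      (u ^ 2 * (2 * py) / (2 * (1 + ρ * u ^ 2))) py := by
    have h2 : HasDerivAt (fun py' : ℝ => pu ^ 2 + py' ^ 2) (2 * py) py := by
      have := (hasDerivAt_pow 2 py).const_add (pu ^ 2)
      convert this using 1
      · rfl
      · rfl
      · push_cast; ring
    exact ((h2.const_mul (u ^ 2)).add_const ξ).div_const (2 * (1 + ρ * u ^ 2))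
  have hHy : HasDerivAt (fun _ : ℝ => (u ^ 2 * (pu ^ 2 + py ^ 2) + ξ) / (2 * (1 + ρ * u ^ 2)))
      0 y := hasDerivAt_const _ _
  -- S1 derivatives
  have hSu : HasDerivAt (fun u' => u' * pu * py +
      y * (py ^ 2 - 2 * ρ * ((u' ^ 2 * (pu ^ 2 + py ^ 2) + ξ) / (2 * (1 + ρ * u' ^ 2)))))
      (pu * py + y * (-(2 * ρ * ((2 * u * (pu ^ 2 + py ^ 2) * (2 * (1 + ρ * u ^ 2)) -
        (u ^ 2 * (pu ^ 2 + py ^ 2) + ξ) * (2 * (ρ * (2 * u)))) / (2 * (1 + ρ * u ^ 2)) ^ 2)))) u := by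
    have h1 : HasDerivAt (fun u' : ℝ => u' * pu * py) (1 * pu * py) u :=
      ((hasDerivAt_id u).mul_const pu).mul_const py
    have := h1.add (((hHu.const_mul (2 * ρ)).const_sub (py ^ 2)).const_mul y)
    convert this using 1
    · rfl
    · rfl
    · rfl
    · ring
  have hSy : HasDerivAt (fun y' => u * pu * py +
      y' * (py ^ 2 - 2 * ρ * ((u ^ 2 * (pu ^ 2 + py ^ 2) + ξ) / (2 * (1 + ρ * u ^ 2)))))
      (py ^ 2 - 2 * ρ * ((u ^ 2 * (pu ^ 2 + py ^ 2) + ξ) / (2 * (1 + ρ * u ^ 2)))) y := by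
    have := ((hasDerivAt_id y).mul_const
      (py ^ 2 - 2 * ρ * ((u ^ 2 * (pu ^ 2 + py ^ 2) + ξ) / (2 * (1 + ρ * u ^ 2))))).const_add
      (u * pu * py)
    convert this using 1
    · rfl
    · rfl
    · rfl
    · ring
  have hSpu : HasDerivAt (fun pu' => u * pu' * py +
      y * (py ^ 2 - 2 * ρ * ((u ^ 2 * (pu' ^ 2 + py ^ 2) + ξ) / (2 * (1 + ρ * u ^ 2)))))
      (u * py + y * (-(2 * ρ * (u ^ 2 * (2 * pu) / (2 * (1 + ρ * u ^ 2)))))) pu := by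
    have h1 : HasDerivAt (fun pu' : ℝ => u * pu' * py) (u * py) pu := by
      simpa using ((hasDerivAt_id pu).const_mul u).mul_const py
    have := h1.add (((hHpu.const_mul (2 * ρ)).const_sub (py ^ 2)).const_mul y)
    convert this using 1
    all_goals rfl
  have hSpy : HasDerivAt (fun py' => u * pu * py' +
      y * (py' ^ 2 - 2 * ρ * ((u ^ 2 * (pu ^ 2 + py' ^ 2) + ξ) / (2 * (1 + ρ * u ^ 2)))))
      (u * pu + y * (2 * py - 2 * ρ * (u ^ 2 * (2 * py) / (2 * (1 + ρ * u ^ 2))))) py := by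
    have h1 : HasDerivAt (fun py' : ℝ => u * pu * py') (u * pu) py := by
      simpa using (hasDerivAt_id py).const_mul (u * pu)
    have h2 : HasDerivAt (fun py' : ℝ => py' ^ 2) (2 * py) py := by
      have := hasDerivAt_pow 2 py
      convert this using 1
      · rfl
      · push_cast; ring
    have := h1.add (((h2.sub (hHpy.const_mul (2 * ρ))).const_mul y))
    convert this using 1
    all_goals rfl
  simp only [poissonBracket, Haff, S1aff]
  rw [hHu.deriv, hHpu.deriv, hHpy.deriv, hHy.deriv, hSu.deriv, hSy.deriv, hSpu.deriv, hSpy.deriv]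
  field_simp
  ring
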